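/- Let ε, δ > 0 and α, β, ρ, σ : ℤ → ℝ be sequences. Define b_n = ε Σ_k^n β_k and s_m = δ Σ_k^m σ_k (bidirectional sums), and set ω^m_n = (1 − b_n s_m) α_{n+1} ρ_{m+1}, A_n = α_{n+1} α_n β_n, B_m = ρ_{m+1} ρ_m σ_m. Then for all (n, m) ∈ ℤ²: ω^{m+1}_{n+1} ω^m_n − ω^m_{n+1} ω^{m+1}_n + εδ A_{n+1} B_{m+1} = 0. -/

import Mathlib

/-- Bidirectional sum: `Σ_k^n x_k = Σ_{k=1}^n x_k` for `n ≥ 1`, `0` for `n = 0`, and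
`−Σ_{k=n+1}^0 x_k` for `n ≤ −1`. -/
noncomputable def bsum (x : ℤ → ℝ) (n : ℤ) : ℝ :=
  if 1 ≤ n then ∑ k ∈ Finset.Icc (1:ℤ) n, x k
  else if n = 0 then 0
  else -∑ k ∈ Finset.Icc (n+1) (0:ℤ), x k

lemma bsum_add_one (x : ℤ → ℝ) (n : ℤ) : bsum x (n + 1) = bsum x n + x (n + 1) := by
  unfold bsum
  rcases lt_trichotomy n 0 with hneg | rfl | hpos
  · obtain rfl | hlt := eq_or_lt_of_le (Int.le_sub_one_of_lt hneg)
    · norm_num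
    · rw [if_neg (by omega), if_neg (by omega), if_neg (by omega), if_neg (by omega),
        ← Finset.insert_Icc_add_one_left_eq_Icc (by omega : n + 1 ≤ 0),
        Finset.sum_insert (by simp)]
      ring
  · norm_num
  · rw [if_pos (by omega), if_pos (by omega),
      ← Finset.insert_Icc_right_eq_Icc_add_one (by omega : (1 : ℤ) ≤ n + 1),
      Finset.sum_insert (by simp), add_comm]

/-- `ω n m` stands for `ω^m_n`. -/
theorem stmt11_general (ε δ : ℝ)
    (α β ρ σ : ℤ → ℝ) (b s : ℤ → ℝ)
    (hb : ∀ n, b n = ε * bsum β n)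
    (hs : ∀ m, s m = δ * bsum σ m)
    (ω : ℤ → ℤ → ℝ) (A B : ℤ → ℝ)
    (hω : ∀ n m, ω n m = (1 - b n * s m) * α (n+1) * ρ (m+1))
    (hA : ∀ n, A n = α (n+1) * α n * β n)
    (hB : ∀ m, B m = ρ (m+1) * ρ m * σ m) :
    ∀ n m : ℤ,
      ω (n+1) (m+1) * ω n m - ω (n+1) m * ω n (m+1)
        + ε * δ * A (n+1) * B (m+1) = 0 := by
  intro n m
  have hb_succ : b (n + 1) = b n + ε * β (n + 1) := by rw [hb, hb, bsum_add_one]; ring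
  have hs_succ : s (m + 1) = s m + δ * σ (m + 1) := by rw [hs, hs, bsum_add_one]; ring
  simp only [hω, hA, hB, hb_succ, hs_succ]
  ring

/-- The data `ω^m_n = (1 − b_n s_m) α_{n+1} ρ_{m+1}`, `A_n = α_{n+1}α_nβ_n`,
`B_m = ρ_{m+1}ρ_mσ_m` solves the discrete Liouville equation
`ω^{m+1}_{n+1}ω^m_n − ω^m_{n+1}ω^{m+1}_n + εδA_{n+1}B_{m+1} = 0`.
Here `ω n m` denotes `ω^m_n`. -/
theorem stmt11 (ε δ : ℝ) (hε : 0 < ε) (hδ : 0 < δ)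
    (α β ρ σ : ℤ → ℝ) (b s : ℤ → ℝ)
    (hb : ∀ n, b n = ε * bsum β n)
    (hs : ∀ m, s m = δ * bsum σ m)
    (ω : ℤ → ℤ → ℝ) (A B : ℤ → ℝ)
    (hω : ∀ n m, ω n m = (1 - b n * s m) * α (n+1) * ρ (m+1))
    (hA : ∀ n, A n = α (n+1) * α n * β n)
    (hB : ∀ m, B m = ρ (m+1) * ρ m * σ m) :
    ∀ n m : ℤ,
      ω (n+1) (m+1) * ω n m - ω (n+1) m * ω n (m+1)
        + ε * δ * A (n+1) * B (m+1) = 0 :=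
  stmt11_general ε δ α β ρ σ b s hb hs ω A B hω hA hB
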